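/- For the Kundt metric with ∂W_i/∂v = 0 identically for all i = 2,…,n−1 (the Kundt–RNV, or Walker, form), the null one-form ℓ♭ (components ℓ_u = 1, others zero) is recurrent: ∇_a ℓ_b = λ_a ℓ_b for all a,b, where λ is the one-form with components λ_u = ∂H/∂v and all other components zero; equivalently ∇_a ℓ_b = (∂H/∂v) ℓ_a ℓ_b. -/

import Mathlib

open Matrix

/-- Points of the Kundt spacetime `ℝⁿ` with `n = m + 2`, written as coordinates
`(v, u, x)` with transverse coordinates `x = (x²,…,x^{n-1}) ∈ ℝ^m`. -/
abbrev KPt (m : ℕ) := ℝ × ℝ × (Fin m → ℝ)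

/-- Coordinate indices for the Kundt metric: `Sum.inl 0` is the `v`-index, `Sum.inl 1` is the
`u`-index, and `Sum.inr k` are the transverse indices. -/
abbrev KIdx (m : ℕ) := Fin 2 ⊕ Fin m

/-- The Kundt metric `ds² = 2du(dv + H du + W_i dx^i) + g_ij dx^i dx^j`, as a symmetric
matrix-valued function on `ℝⁿ`: components `g_vv = 0`, `g_vu = g_uv = 1`, `g_vi = 0`,
`g_uu = 2H`, `g_ui = W_i`, and transverse block `g_ij(u,x)`. -/
noncomputable def kundt {m : ℕ} (H : KPt m → ℝ) (W : Fin m → KPt m → ℝ)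
    (gT : ℝ → (Fin m → ℝ) → Matrix (Fin m) (Fin m) ℝ) (p : KPt m) :
    Matrix (KIdx m) (KIdx m) ℝ :=
  Matrix.of fun a b =>
    match a, b with
    | Sum.inl i, Sum.inl j =>
        if i = 0 then (if j = 0 then 0 else 1)
        else (if j = 0 then 1 else 2 * H p)
    | Sum.inl i, Sum.inr _k => if i = 0 then 0 else W _k p
    | Sum.inr _k, Sum.inl i => if i = 0 then 0 else W _k p
    | Sum.inr k, Sum.inr l => gT p.2.1 p.2.2 k l

/-- The Minkowski matrix `diag(-1,1,…,1)` on the Kundt index set. -/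
noncomputable def kMink (m : ℕ) : Matrix (KIdx m) (KIdx m) ℝ :=
  Matrix.diagonal (fun a => if a = Sum.inl 0 then (-1 : ℝ) else 1)

/-- The coordinate basis vectors of `ℝⁿ = ℝ × ℝ × ℝ^м`: `∂/∂v`, `∂/∂u` and `∂/∂x^k`. -/
noncomputable def kBasis {m : ℕ} : KIdx m → KPt m
  | Sum.inl i => if i = 0 then ((1 : ℝ), (0 : ℝ), (0 : Fin m → ℝ)) else (0, 1, 0)
  | Sum.inr k => (0, 0, Pi.single k 1)

/-- The coordinate partial derivative `∂_a f` of a scalar function on `ℝⁿ`. -/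
noncomputable def kPDeriv {m : ℕ} (a : KIdx m) (f : KPt m → ℝ) (p : KPt m) : ℝ :=
  fderiv ℝ f p (kBasis a)

/-- The Levi-Civita connection coefficients
`Γ^d_ab = (1/2) g^{dc} (∂_a g_cb + ∂_b g_ca - ∂_c g_ab)` of the Kundt metric. -/
noncomputable def kChristoffel {m : ℕ} (H : KPt m → ℝ) (W : Fin m → KPt m → ℝ)
    (gT : ℝ → (Fin m → ℝ) → Matrix (Fin m) (Fin m) ℝ) (d a b : KIdx m) (p : KPt m) : ℝ :=
  (1 / 2) * ∑ c : KIdx m, (kundt H W gT p)⁻¹ d c *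
    (kPDeriv a (fun q => kundt H W gT q c b) p + kPDeriv b (fun q => kundt H W gT q c a) p
      - kPDeriv c (fun q => kundt H W gT q a b) p)

/-- The one-form `ℓ♭` with components `ℓ_a = g_av`, i.e. `ℓ_u = 1` and all other components
zero. -/
noncomputable def lFlat {m : ℕ} : KIdx m → ℝ := fun a => if a = Sum.inl 1 then 1 else 0

/-- The covariant derivative `∇_a ℓ_b = ∂_a ℓ_b - Γ^c_ab ℓ_c` of the constant one-form `ℓ♭`
with respect to the Levi-Civita connection of the Kundt metric. -/
noncomputable def kCovDl {m : ℕ} (H : KPt m → ℝ) (W : Fin m → KPt m → ℝ)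
    (gT : ℝ → (Fin m → ℝ) → Matrix (Fin m) (Fin m) ℝ) (a b : KIdx m) (p : KPt m) : ℝ :=
  kPDeriv a (fun _ => lFlat b) p - ∑ c : KIdx m, kChristoffel H W gT c a b p * lFlat c

/-- The null coordinate vector field `ℓ = ∂/∂v`, as a vector of components. -/
noncomputable def lVec {m : ℕ} : KIdx m → ℝ := fun a => if a = Sum.inl 0 then 1 else 0

/-!
The `v`-row of the Kundt metric is `ℓ♭`, so the `u`-row of its inverse is `ℓ = ∂_v`, i.e.
`g^{uc} = δ^c_v`; the metric is invertible because its transverse block is. Since `ℓ♭` has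
constant components, `∇_a ℓ_b = -Γ^u_ab = -½ (∂_a g_vb + ∂_b g_va - ∂_v g_ab) = ½ ∂_v g_ab`,
and when `∂_v W_i = 0` the only component of the metric depending on `v` is `g_uu = 2H`.
-/

theorem Matrix.inv_row_of_row_eq_single {n α : Type*} [Fintype n] [DecidableEq n] [CommRing α]
    {M : Matrix n n α} (hM : IsUnit M.det) {i j : n} (h : M i = Pi.single j 1) :
    M⁻¹ j = Pi.single i 1 := by
  ext c
  have hrow := congr_fun (congr_fun (M.mul_nonsing_inv hM) i) c
  rw [mul_apply, h, Fintype.sum_eq_single j (fun d hd => by simp [hd]), Pi.single_eq_same,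
    one_mul, one_apply] at hrow
  simp [hrow, Pi.single_apply, eq_comm]

theorem fderiv_apply_eq_zero_of_forall_add_smul_eq {𝕜 E F : Type*} [NontriviallyNormedField 𝕜]
    [NormedAddCommGroup E] [NormedSpace 𝕜 E] [NormedAddCommGroup F] [NormedSpace 𝕜 F]
    {f : E → F} {x v : E} (h : ∀ t : 𝕜, f (x + t • v) = f x) : fderiv 𝕜 f x v = 0 := by
  by_cases hf : DifferentiableAt 𝕜 f x
  · rw [← hf.lineDeriv_eq_fderiv, lineDeriv, funext h, deriv_const]
  · rw [fderiv_zero_of_not_differentiableAt hf, _root_.zero_apply]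

section Kundt

variable {m : ℕ} (H : KPt m → ℝ) (W : Fin m → KPt m → ℝ)
  (gT : ℝ → (Fin m → ℝ) → Matrix (Fin m) (Fin m) ℝ) (p : KPt m)

theorem lFlat_eq_single : (lFlat : KIdx m → ℝ) = Pi.single (Sum.inl 1) 1 := by
  funext a; simp [lFlat, Pi.single_apply]

theorem lVec_eq_single : (lVec : KIdx m → ℝ) = Pi.single (Sum.inl 0) 1 := by
  funext a; simp [lVec, Pi.single_apply]

theorem kundt_row_v : kundt H W gT p (Sum.inl 0) = lFlat := by
  funext b
  rcases b with j | l
  · fin_cases j <;> simp [kundt, lFlat]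
  · simp [kundt, lFlat]

theorem kundt_det_ne_zero (hG : (gT p.2.1 p.2.2).det ≠ 0) : (kundt H W gT p).det ≠ 0 := by
  rw [Ne, ← exists_mulVec_eq_zero_iff]
  rintro ⟨x, hx0, hx⟩
  have hrow (a : KIdx m) := congr_fun hx a
  have hu : x (Sum.inl 1) = 0 := by
    simpa [mulVec, dotProduct, Fintype.sum_sum_type, kundt] using hrow (Sum.inl 0)
  have hT : (fun k => x (Sum.inr k)) = 0 := by
    refine eq_zero_of_mulVec_eq_zero hG (funext fun k => ?_)
    simpa [mulVec, dotProduct, Fintype.sum_sum_type, kundt, hu] using hrow (Sum.inr k)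
  have hv : x (Sum.inl 0) = 0 := by
    simpa [mulVec, dotProduct, Fintype.sum_sum_type, kundt, hu, funext_iff.mp hT]
      using hrow (Sum.inl 1)
  refine hx0 (funext fun a => ?_)
  rcases a with i | k
  · fin_cases i
    exacts [hv, hu]
  · exact congr_fun hT k

theorem kundt_inv_row_u (hG : (gT p.2.1 p.2.2).det ≠ 0) :
    (kundt H W gT p)⁻¹ (Sum.inl 1) = lVec := by
  rw [lVec_eq_single]
  refine inv_row_of_row_eq_single (isUnit_iff_ne_zero.mpr (kundt_det_ne_zero H W gT p hG)) ?_
  rw [kundt_row_v, lFlat_eq_single]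

theorem kPDeriv_v_kundt (hWv : ∀ k, kPDeriv (Sum.inl 0) (W k) p = 0) (a b : KIdx m) :
    kPDeriv (Sum.inl 0) (fun q => kundt H W gT q a b) p
      = 2 * kPDeriv (Sum.inl 0) H p * lFlat a * lFlat b := by
  have hconst (f : KPt m → ℝ) (hf : ∀ t : ℝ, f (p + t • kBasis (Sum.inl 0)) = f p) :
      kPDeriv (Sum.inl 0) f p = 0 :=
    fderiv_apply_eq_zero_of_forall_add_smul_eq hf
  rcases a with i | k <;> rcases b with j | l
  · fin_cases i <;> fin_cases j
    · simpa [lFlat] using hconst _ fun t => by simp [kundt]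
    · simpa [lFlat] using hconst _ fun t => by simp [kundt]
    · simpa [lFlat] using hconst _ fun t => by simp [kundt]
    · simp only [kundt, lFlat, kPDeriv]
      simp [show (fun q => 2 * H q) = (2 : ℝ) • H from rfl, fderiv_const_smul_field]
  · fin_cases i
    · simpa [lFlat] using hconst _ fun t => by simp [kundt]
    · simpa [kundt, lFlat] using hWv l
  · fin_cases j
    · simpa [lFlat] using hconst _ fun t => by simp [kundt]
    · simpa [kundt, lFlat] using hWv k
  · simpa [lFlat] using hconst _ fun t => by simp [kundt, kBasis]

theorem kChristoffel_u (hG : (gT p.2.1 p.2.2).det ≠ 0)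
    (hWv : ∀ k, kPDeriv (Sum.inl 0) (W k) p = 0) (a b : KIdx m) :
    kChristoffel H W gT (Sum.inl 1) a b p = -(kPDeriv (Sum.inl 0) H p * lFlat a * lFlat b) := by
  have hrow (c : KIdx m) : (fun q => kundt H W gT q (Sum.inl 0) c) = fun _ => lFlat c :=
    funext fun q => congr_fun (kundt_row_v H W gT q) c
  rw [kChristoffel, kundt_inv_row_u H W gT p hG]
  simp only [lVec_eq_single, Pi.single_apply, ite_mul, one_mul, zero_mul, Finset.sum_ite_eq',
    Finset.mem_univ, if_true]
  rw [hrow, hrow, kPDeriv_v_kundt H W gT p hWv]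
  simp only [kPDeriv, fderiv_const_apply, _root_.zero_apply]
  ring

theorem kCovDl_eq_neg_kChristoffel (a b : KIdx m) :
    kCovDl H W gT a b p = -kChristoffel H W gT (Sum.inl 1) a b p := by
  simp [kCovDl, kPDeriv, lFlat_eq_single, Pi.single_apply]

end Kundt

theorem kundt_rnv_recurrent_general {m : ℕ}
    (H : KPt m → ℝ) (W : Fin m → KPt m → ℝ)
    (gT : ℝ → (Fin m → ℝ) → Matrix (Fin m) (Fin m) ℝ)
    (hpos : ∀ u x, (gT u x).PosDef)
    (hWv : ∀ (k : Fin m) (p : KPt m), kPDeriv (Sum.inl 0) (W k) p = 0) :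
    ∀ (p : KPt m) (a b : KIdx m),
      kCovDl H W gT a b p
          = (if a = Sum.inl 1 then kPDeriv (Sum.inl 0) H p else 0) * lFlat b ∧
      kCovDl H W gT a b p = kPDeriv (Sum.inl 0) H p * lFlat a * lFlat b := by
  intro p a b
  have hcov : kCovDl H W gT a b p = kPDeriv (Sum.inl 0) H p * lFlat a * lFlat b := by
    rw [kCovDl_eq_neg_kChristoffel,
      kChristoffel_u H W gT p (hpos _ _).det_pos.ne' (fun k => hWv k p), neg_neg]
  refine ⟨?_, hcov⟩
  rw [hcov]
  by_cases ha : a = Sum.inl 1 <;> simp [ha, lFlat]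

/-- For the Kundt metric with `∂W_i/∂v = 0` (the Kundt–RNV, or Walker, form), the null
one-form `ℓ♭` is recurrent: `∇_a ℓ_b = λ_a ℓ_b` where `λ` is the one-form with `λ_u = ∂H/∂v`
and all other components zero; equivalently `∇_a ℓ_b = (∂H/∂v) ℓ_a ℓ_b`. -/
theorem kundt_rnv_recurrent {m : ℕ} (hm : 2 ≤ m)
    (H : KPt m → ℝ) (W : Fin m → KPt m → ℝ)
    (gT : ℝ → (Fin m → ℝ) → Matrix (Fin m) (Fin m) ℝ)
    (hH : ContDiff ℝ (⊤ : ℕ∞) H) (hW : ∀ k, ContDiff ℝ (⊤ : ℕ∞) (W k))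
    (hgT : ∀ k l, ContDiff ℝ (⊤ : ℕ∞) (fun q : ℝ × (Fin m → ℝ) => gT q.1 q.2 k l))
    (hsym : ∀ u x, (gT u x).IsSymm) (hpos : ∀ u x, (gT u x).PosDef)
    (hWv : ∀ (k : Fin m) (p : KPt m), kPDeriv (Sum.inl 0) (W k) p = 0) :
    ∀ (p : KPt m) (a b : KIdx m),
      kCovDl H W gT a b p
          = (if a = Sum.inl 1 then kPDeriv (Sum.inl 0) H p else 0) * lFlat b ∧
      kCovDl H W gT a b p = kPDeriv (Sum.inl 0) H p * lFlat a * lFlat b :=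
  kundt_rnv_recurrent_general H W gT hpos hWv
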